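/- Let D = (V, 𝒜) be a B-hypergraph, let S, T ⊆ V, let P_ST be an S-T hyperpath in D with an ordering (A_1, …, A_k) satisfying T(A_i) ⊆ S ∪ ⋃_{1 ≤ j ≤ i−1} H(A_j), and write A_k = (T_k, {h_k}). Let f, D′ = (V \ {h_k}, ℬ), and T′ = (T ∪ T_k) \ (S ∪ {h_k}) be as in the branching construction (f(B) = B if h_k ∉ T(B) and f(B) = ((T(B) \ {h_k}) ∪ T_k, H(B)) otherwise, for B ∈ 𝒜 with H(B) ≠ {h_k}; ℬ = { f(B) : B ∈ 𝒜, H(B) ≠ {h_k} }). If Q′ is an S-T′ hyperpath in D′, then the set {A_k} ∪ { f^{-1}(B′) : B′ ∈ Q′ } is an S-T hyperpath in D containing A_k. -/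

import Mathlib

/-!
A `B`-hypergraph (parallel hyperarcs allowed) on a vertex type `V` is modelled by an
arc-index type `A` together with a tail map `tl : A → Set V`, a head map `hd : A → V`
(every hyperarc is a `B`-hyperarc, i.e. its head set is the singleton `{hd a}`), and a set
`𝒜 : Set A` of hyperarcs.  Disjointness of tails and heads is the condition
`∀ a ∈ 𝒜, hd a ∉ tl a`.
-/

/-- B-connection from a set `S` of vertices in the edge-induced subhypergraph `D[P]`:
every vertex of `S` is B-connected from `S`, and if all tail vertices of an arc `a ∈ P`
are B-connected from `S`, then its head `hd a` is B-connected from `S`. -/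
inductive BConnB {V A : Type*} (tl : A → Set V) (hd : A → V) (P : Set A) (S : Set V) :
    V → Prop
  | base {v : V} (hv : v ∈ S) : BConnB tl hd P S v
  | step (a : A) (ha : a ∈ P) (hT : ∀ u ∈ tl a, BConnB tl hd P S u) :
      BConnB tl hd P S (hd a)

/-- A set of hyperarcs `P ⊆ 𝒜` is an `S`-`T` hyperpath if every vertex of `T` is
B-connected from `S` in `D[P]` and `P` is inclusion-wise minimal with this property. -/
def IsSTHyp {V A : Type*} (tl : A → Set V) (hd : A → V) (𝒜 : Set A) (S T : Set V)
    (P : Set A) : Prop :=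
  P ⊆ 𝒜 ∧ (∀ v ∈ T, BConnB tl hd P S v) ∧
    ∀ Q, Q ⊂ P → ¬ (∀ v ∈ T, BConnB tl hd Q S v)

/-- The ordering condition on a list `(A_1, …, A_k)` of hyperarcs:
`T(A_i) ⊆ S ∪ ⋃_{j < i} H(A_j)` for every `i`. -/
def GoodOrder {V A : Type*} (tl : A → Set V) (hd : A → V) (S : Set V) (l : List A) : Prop :=
  ∀ i : Fin l.length,
    tl (l.get i) ⊆ S ∪ {v | ∃ j : Fin l.length, j < i ∧ v = hd (l.get j)}

/-- The vertex set of the edge-induced subhypergraph `D[P]`. -/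
def dverts {V A : Type*} (tl : A → Set V) (hd : A → V) (P : Set A) : Set V :=
  {v | ∃ a ∈ P, v ∈ tl a ∨ v = hd a}

open Classical in
/-- The modified tail map of the branching construction: for an arc `B` with
`H(B) ≠ {h_k}`, `f(B) = B` if `h_k ∉ T(B)`, and otherwise
`f(B) = ((T(B) \ {h_k}) ∪ T_k, H(B))`.  Since arcs are indexed, `f` is the identity on
indices and only the tail map changes; `f` is thus a bijection onto the (multi)set `ℬ`,
and `f⁻¹` is the identity on indices as well. -/
noncomputable def newTl {V A : Type*} (tl : A → Set V) (hk : V) (Tk : Set V) :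
    A → Set V :=
  fun b => if hk ∈ tl b then (tl b \ {hk}) ∪ Tk else tl b

section Aux
variable {V A : Type*} {tl : A → Set V} {hd : A → V} {S : Set V}

lemma bconn_mono {P Q : Set A} (h : P ⊆ Q) {v : V} (hv : BConnB tl hd P S v) :
    BConnB tl hd Q S v := by
  induction hv with
  | base hv => exact .base hv
  | step a ha _ ih => exact .step a (h ha) ih

lemma bconn_inv {P : Set A} {v : V} (h : BConnB tl hd P S v) :
    v ∈ S ∨ ∃ a ∈ P, hd a = v ∧ ∀ u ∈ tl a, BConnB tl hd P S u := by
  cases h with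
  | base hv => exact Or.inl hv
  | step a ha hT => exact Or.inr ⟨a, ha, rfl, hT⟩

lemma not_bconn_hk {R : Set A} {hk : V} (hS : hk ∉ S) (hR : ∀ b ∈ R, hd b ≠ hk)
    (h : BConnB tl hd R S hk) : False := by
  rcases bconn_inv h with h1 | ⟨a, ha, heq, _⟩
  · exact hS h1
  · exact hR a ha heq

lemma bconn_erase {P : Set A} {ak : A}
    (hhk : BConnB tl hd (P \ {ak}) S (hd ak)) {v : V}
    (hv : BConnB tl hd P S v) : BConnB tl hd (P \ {ak}) S v := by
  induction hv with
  | base h => exact .base h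
  | step a ha _ ih =>
    by_cases hb : a = ak
    · subst hb; exact hhk
    · exact .step a ⟨ha, hb⟩ ih

lemma prefix_conn {l : List A} (hord : GoodOrder tl hd S l) :
    ∀ n (i : Fin l.length), i.val = n →
      BConnB tl hd {a | ∃ j : Fin l.length, j ≤ i ∧ a = l.get j} S (hd (l.get i)) := by
  intro n
  induction n using Nat.strong_induction_on with
  | _ n ih =>
    intro i hi
    refine .step (l.get i) ⟨i, le_refl i, rfl⟩ ?_
    intro u hu
    rcases hord i hu with hS | ⟨j, hj, rfl⟩
    · exact .base hS
    · refine bconn_mono ?_ (ih j.val (hi ▸ hj) j rfl)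
      rintro a ⟨m, hm, rfl⟩
      exact ⟨m, le_trans hm (le_of_lt hj), rfl⟩

lemma liftA {ak : A} {Q' : Set A} {v : V}
    (hv : BConnB (newTl tl (hd ak) (tl ak)) hd Q' S v) :
    BConnB tl hd (insert ak Q') S v := by
  induction hv with
  | base h => exact .base h
  | step b hb _ ih =>
    simp only [newTl] at ih
    refine .step b (Set.mem_insert_of_mem _ hb) ?_
    intro u hu
    by_cases hc : hd ak ∈ tl b
    · rw [if_pos hc] at ih
      by_cases huk : u = hd ak
      · subst huk
        exact .step ak (Set.mem_insert _ _) fun w hw => ih w (Or.inr hw)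
      · exact ih u (Or.inl ⟨hu, huk⟩)
    · rw [if_neg hc] at ih
      exact ih u hu

lemma pushB {ak : A} {Q' Q : Set A}
    (hS : hd ak ∉ S) (hQ : Q ⊆ insert ak Q') (hheads : ∀ b ∈ Q', hd b ≠ hd ak)
    (hdak : hd ak ∉ tl ak) {v : V} (hv : BConnB tl hd Q S v) :
    BConnB (newTl tl (hd ak) (tl ak)) hd (Q \ {ak}) S v ∨
      (v = hd ak ∧ ∀ u ∈ tl ak,
        BConnB (newTl tl (hd ak) (tl ak)) hd (Q \ {ak}) S u) := by
  have hh : ∀ b ∈ Q \ {ak}, hd b ≠ hd ak := by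
    rintro b ⟨hb, hb2⟩
    rcases Set.mem_insert_iff.mp (hQ hb) with rfl | hbQ'
    · exact absurd rfl hb2
    · exact hheads b hbQ'
  induction hv with
  | base h => exact Or.inl (.base h)
  | step b hb _ ih =>
    by_cases hbeq : b = ak
    · subst hbeq
      refine Or.inr ⟨rfl, fun u hu => ?_⟩
      rcases ih u hu with h | ⟨h, _⟩
      · exact h
      · exact absurd (h ▸ hu) hdak
    · left
      have hbQ' : b ∈ Q' := (Set.mem_insert_iff.mp (hQ hb)).resolve_left hbeq
      refine .step b ⟨hb, hbeq⟩ ?_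
      intro u hu
      simp only [newTl] at hu
      by_cases hc : hd ak ∈ tl b
      · rw [if_pos hc] at hu
        rcases hu with ⟨hu, hune⟩ | hu
        · rcases ih u hu with h | ⟨h, _⟩
          · exact h
          · exact absurd h hune
        · rcases ih (hd ak) hc with h | ⟨_, hall⟩
          · exact absurd h (not_bconn_hk hS hh)
          · exact hall u hu
      · rw [if_neg hc] at hu
        rcases ih u hu with h | ⟨h, _⟩
        · exact h
        · exact absurd (h ▸ hu) hc

end Aux

/-- with the branching construction around the last arc `A_k = (T_k, {h_k})`
of an ordered `S`-`T` hyperpath (`D′ = (V \ {h_k}, ℬ)`, `T′ = (T ∪ T_k) \ (S ∪ {h_k})`),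
if `Q′` is an `S`-`T′` hyperpath in `D′`, then `{A_k} ∪ {f⁻¹(B′) : B′ ∈ Q′}` is an
`S`-`T` hyperpath in `D` containing `A_k`. -/
theorem branching_lift {V A : Type*} (tl : A → Set V) (hd : A → V) (𝒜 : Set A)
    (S T : Set V) (hdisj : ∀ a ∈ 𝒜, hd a ∉ tl a)
    (P : Set A) (hP : IsSTHyp tl hd 𝒜 S T P)
    (l : List A) (hne : l ≠ []) (hnd : l.Nodup) (hset : {a | a ∈ l} = P)
    (hord : GoodOrder tl hd S l)
    (ak : A) (hak : ak = l.getLast hne)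
    (Q' : Set A)
    (hQ' : IsSTHyp (newTl tl (hd ak) (tl ak)) hd {b ∈ 𝒜 | hd b ≠ hd ak} S
      ((T ∪ tl ak) \ (S ∪ {hd ak})) Q') :
    IsSTHyp tl hd 𝒜 S T (insert ak Q') ∧ ak ∈ insert ak Q' := by
  obtain ⟨hPA, hPconn, hPmin⟩ := hP
  obtain ⟨hQA, hQconn, hQmin⟩ := hQ'
  have hmeml : ∀ b ∈ P, b ∈ l := by intro b hb; rw [← hset] at hb; exact hb
  have hmemP : ∀ b ∈ l, b ∈ P := by intro b hb; rw [← hset]; exact hb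
  have hakl : ak ∈ l := hak ▸ List.getLast_mem hne
  have hakP : ak ∈ P := hmemP ak hakl
  have hakA : ak ∈ 𝒜 := hPA hakP
  have hdak : hd ak ∉ tl ak := hdisj ak hakA
  have hQ'sub : ∀ b ∈ Q', hd b ≠ hd ak := fun b hb => (hQA hb).2
  have hQ'A : Q' ⊆ 𝒜 := fun b hb => (hQA hb).1
  have hlen : l.length - 1 < l.length :=
    Nat.sub_lt (List.length_pos_iff.mpr hne) one_pos
  have hgetak : l.get ⟨l.length - 1, hlen⟩ = ak := by
    rw [hak, List.getLast_eq_getElem, List.get_eq_getElem]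
  have key : ¬ BConnB tl hd (P \ {ak}) S (hd ak) := fun h =>
    hPmin (P \ {ak}) (Set.sdiff_singleton_ssubset.mpr hakP)
      fun v hv => bconn_erase h (hPconn v hv)
  have hkS : hd ak ∉ S := fun h => key (.base h)
  have hlast : ∀ j : Fin l.length, (j : ℕ) < l.length - 1 → l.get j ≠ ak := by
    intro j hj heq
    have h1 : l.get j = l.get ⟨l.length - 1, hlen⟩ := by rw [heq, hgetak]
    have h2 := (hnd.get_inj_iff).mp h1
    rw [Fin.ext_iff] at h2
    simp only [] at h2
    omega
  have heads : ∀ j : Fin l.length, (j : ℕ) < l.length - 1 → hd (l.get j) ≠ hd ak := by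
    intro j hj heq
    apply key
    rw [← heq]
    refine bconn_mono ?_ (prefix_conn hord j.val j rfl)
    rintro a ⟨m, hm, rfl⟩
    have hm' : (m : ℕ) ≤ (j : ℕ) := hm
    exact ⟨hmemP _ (l.get_mem m), hlast m (by omega)⟩
  have htl : ∀ b ∈ P, hd ak ∉ tl b := by
    intro b hb hmem
    obtain ⟨i, hi, hib⟩ := List.mem_iff_getElem.mp (hmeml b hb)
    have hib' : l.get ⟨i, hi⟩ = b := hib
    rw [← hib'] at hmem
    rcases hord ⟨i, hi⟩ hmem with h | ⟨j, hj, hEq⟩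
    · exact hkS h
    · have hj' : (j : ℕ) < i := hj
      exact heads j (by omega) hEq.symm
  have hkT : hd ak ∈ T := by
    by_contra hkT
    refine hPmin (P \ {ak}) (Set.sdiff_singleton_ssubset.mpr hakP) fun v hv => ?_
    have lemC : ∀ w, BConnB tl hd P S w → w = hd ak ∨ BConnB tl hd (P \ {ak}) S w := by
      intro w hw
      induction hw with
      | base h => exact Or.inr (.base h)
      | step b hb _ ih =>
        by_cases hbeq : b = ak
        · subst hbeq; exact Or.inl rfl
        · refine Or.inr (.step b ⟨hb, hbeq⟩ fun u hu => ?_)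
          rcases ih u hu with h | h
          · exact absurd (h ▸ hu) (htl b hb)
          · exact h
    rcases lemC v (hPconn v hv) with h | h
    · exact absurd (h ▸ hv) hkT
    · exact h
  -- connectivity of T in insert ak Q'
  have tlconn : ∀ u ∈ tl ak, BConnB tl hd (insert ak Q') S u := by
    intro u hu
    by_cases hus : u ∈ S
    · exact .base hus
    · refine liftA (hQconn u ⟨Or.inr hu, ?_⟩)
      rintro (h | h)
      · exact hus h
      · exact hdak (h ▸ hu)
  have Tconn : ∀ v ∈ T, BConnB tl hd (insert ak Q') S v := by
    intro v hv
    by_cases hvs : v ∈ S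
    · exact .base hvs
    by_cases hvk : v = hd ak
    · rw [hvk]; exact .step ak (Set.mem_insert _ _) tlconn
    · refine liftA (hQconn v ⟨Or.inl hv, ?_⟩)
      rintro (h | h)
      · exact hvs h
      · exact hvk h
  refine ⟨⟨?_, Tconn, ?_⟩, Set.mem_insert _ _⟩
  · intro b hb
    rcases Set.mem_insert_iff.mp hb with rfl | hb
    · exact hakA
    · exact hQ'A hb
  · intro Q hQQ hcon
    have hQsub : Q ⊆ insert ak Q' := hQQ.subset
    -- ak ∈ Q and its tails are connected in Q
    obtain ⟨hakQ, htails⟩ : ak ∈ Q ∧ ∀ u ∈ tl ak, BConnB tl hd Q S u := by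
      rcases bconn_inv (hcon _ hkT) with h | ⟨b, hbQ, hbeq, hT⟩
      · exact absurd h hkS
      · rcases Set.mem_insert_iff.mp (hQsub hbQ) with rfl | hbQ'
        · exact ⟨hbQ, hT⟩
        · exact absurd hbeq (hQ'sub b hbQ')
    have hsub2 : Q \ {ak} ⊆ Q' := by
      rintro b ⟨hb, hb2⟩
      exact (Set.mem_insert_iff.mp (hQsub hb)).resolve_left hb2
    have hne2 : Q \ {ak} ≠ Q' := by
      intro h
      apply (Set.ssubset_iff_subset_ne.mp hQQ).2
      apply Set.Subset.antisymm hQsub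
      intro b hb
      rcases Set.mem_insert_iff.mp hb with rfl | hb
      · exact hakQ
      · rw [← h] at hb
        exact hb.1
    refine hQmin (Q \ {ak}) (hsub2.ssubset_of_ne hne2) fun v hv => ?_
    obtain ⟨hv1, hv2⟩ := hv
    have hvQ : BConnB tl hd Q S v := by
      rcases hv1 with h | h
      · exact hcon v h
      · exact htails v h
    rcases pushB hkS hQsub hQ'sub hdak hvQ with h | ⟨h, _⟩
    · exact h
    · exact absurd (Or.inr h) hv2
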